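/- Let K be a positive integer and θ_1,...,θ_K ∈ {0,1}. Define a = Σ_{j=1}^{K} 3^{-j-1}·θ_j. Then a ∈ [0, 2/9), and for every k ∈ {1,...,K}, ϱ₃(3^k · a) = θ_k. -/

import Mathlib

/-! Multiplying by `3 ^ k` shifts the ternary expansion `a = ∑ θ_j 3^(-j-1)`: the digits before
`θ_k` become an integer `N` and `3 ^ k a = N + θ_k / 3 + t` with `0 ≤ t < 1/6`. Since `ϱ₃` is
`1`-periodic, `ϱ₃(3 ^ k a) = ϱ₃(θ_k / 3 + t)`, and `T̃` sends `cos(2πt)` to `0` because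
`2πt < π/3 < 4π/9`, and `cos(2π(1/3 + t))` to `1` because this cosine is negative. -/

open Real

/-- T̃(t) = 0 for t > cos(4π/9), 1 − t/cos(4π/9) for 0 ≤ t ≤ cos(4π/9), 1 for t < 0. -/
noncomputable def Ttilde (t : ℝ) : ℝ :=
  if t > Real.cos (4 * Real.pi / 9) then 0
  else if 0 ≤ t then 1 - t / Real.cos (4 * Real.pi / 9)
  else 1

/-- ϱ₃(x) = T̃(cos(2πx)). -/
noncomputable def rho3 (x : ℝ) : ℝ := Ttilde (Real.cos (2 * Real.pi * x))

open Finset in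
noncomputable def ternaryCode (θ : ℕ → ℝ) (K : ℕ) : ℝ :=
  ∑ j ∈ Icc 1 K, (3 : ℝ) ^ (-(j : ℤ) - 1) * θ j

lemma rho3_add_intCast (x : ℝ) (n : ℤ) : rho3 (x + n) = rho3 x := by
  rw [rho3, rho3, show 2 * π * (x + n) = 2 * π * x + n * (2 * π) by ring,
    cos_add_int_mul_two_pi]

lemma rho3_eq_zero_of_abs_lt {x : ℝ} (hx : |x| < 2 / 9) : rho3 x = 0 := by
  have hπ := pi_pos
  have hcos : cos (4 * π / 9) < cos (2 * π * x) := by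
    rw [← cos_abs (2 * π * x), abs_mul, abs_of_pos (by positivity : 0 < 2 * π)]
    apply cos_lt_cos_of_nonneg_of_le_pi (by positivity) (by linarith)
    nlinarith
  rw [rho3, Ttilde, if_pos hcos]

lemma rho3_eq_one_of_mem_Ioo {x : ℝ} (hx : x ∈ Set.Ioo (1 / 4) (3 / 4)) : rho3 x = 1 := by
  have hπ := pi_pos
  have hcos : cos (2 * π * x) < 0 :=
    cos_neg_of_pi_div_two_lt_of_lt (by nlinarith [hx.1]) (by nlinarith [hx.2])
  have hc9 : 0 < cos (4 * π / 9) := cos_pos_of_mem_Ioo ⟨by linarith, by linarith⟩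
  rw [rho3, Ttilde, if_neg (by linarith), if_neg (by linarith)]

namespace Finset

lemma sum_Ioc_add_zpow_three (k n : ℕ) :
    ∑ j ∈ Ioc k (k + n), (3 : ℝ) ^ ((k : ℤ) - j - 1) = (1 - 3 ^ (-(n : ℤ))) / 6 := by
  induction n with
  | zero => simp
  | succ n ih =>
    have hexp : (k : ℤ) - ((k + n + 1 : ℕ) : ℤ) - 1 = -(n : ℤ) - 2 := by omega
    rw [← add_assoc, sum_Ioc_succ_top (Nat.le_add_right k n), ih, hexp,
      show -((n + 1 : ℕ) : ℤ) = -(n : ℤ) - 1 by omega, zpow_sub₀ three_ne_zero,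
      zpow_sub₀ three_ne_zero]
    ring

lemma sum_Ioc_zpow_three_mul_mem_Ico {c : ℕ → ℝ} (hc : ∀ j, c j ∈ Set.Icc 0 1) (k K : ℕ) :
    ∑ j ∈ Ioc k K, (3 : ℝ) ^ ((k : ℤ) - j - 1) * c j ∈ Set.Ico 0 (1 / 6) := by
  refine ⟨sum_nonneg fun j _ => mul_nonneg (by positivity) (hc j).1, ?_⟩
  rcases le_or_gt k K with hkK | hKk
  · obtain ⟨n, rfl⟩ := Nat.exists_eq_add_of_le hkK
    calc ∑ j ∈ Ioc k (k + n), (3 : ℝ) ^ ((k : ℤ) - j - 1) * c j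
        ≤ ∑ j ∈ Ioc k (k + n), (3 : ℝ) ^ ((k : ℤ) - j - 1) :=
          sum_le_sum fun j _ => mul_le_of_le_one_right (by positivity) (hc j).2
      _ = (1 - 3 ^ (-(n : ℤ))) / 6 := sum_Ioc_add_zpow_three k n
      _ < 1 / 6 := by linarith [zpow_pos (three_pos : (0 : ℝ) < 3) (-(n : ℤ))]
  · simp [Ioc_eq_empty_of_le hKk.le]

lemma exists_intCast_sum_Ico_zpow_three_mul {c : ℕ → ℝ} (hc : ∀ j, ∃ n : ℤ, c j = n)
    (i k : ℕ) : ∃ N : ℤ, ∑ j ∈ Ico i k, (3 : ℝ) ^ ((k : ℤ) - j - 1) * c j = N := by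
  choose n hn using hc
  refine ⟨∑ j ∈ Ico i k, 3 ^ (k - j - 1) * n j, ?_⟩
  push_cast
  refine sum_congr rfl fun j hj => ?_
  have hexp : (k : ℤ) - j - 1 = ((k - j - 1 : ℕ) : ℤ) := by
    have := (mem_Ico.mp hj).2
    omega
  rw [hexp, zpow_natCast, hn]

end Finset

open Finset

lemma pow_mul_ternaryCode (θ : ℕ → ℝ) {k K : ℕ} (hk : k ∈ Icc 1 K) :
    3 ^ k * ternaryCode θ K = ∑ j ∈ Ico 1 k, (3 : ℝ) ^ ((k : ℤ) - j - 1) * θ j + θ k / 3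
      + ∑ j ∈ Ioc k K, (3 : ℝ) ^ ((k : ℤ) - j - 1) * θ j := by
  obtain ⟨hk1, hkK⟩ := mem_Icc.mp hk
  have hshift : ∀ j : ℕ, (3 : ℝ) ^ k * ((3 : ℝ) ^ (-(j : ℤ) - 1) * θ j)
      = (3 : ℝ) ^ ((k : ℤ) - j - 1) * θ j := fun j => by
    rw [← mul_assoc, ← zpow_natCast, ← zpow_add₀ three_ne_zero]
    congr 2
    ring
  rw [ternaryCode, mul_sum, sum_congr rfl fun j _ => hshift j, ← Ico_add_one_right_eq_Icc,
    ← sum_Ico_consecutive _ hk1 (by omega : k ≤ K + 1),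
    sum_eq_sum_Ico_succ_bot (by omega : k < K + 1), Ico_add_one_add_one_eq_Ioc,
    show (k : ℤ) - k - 1 = -1 by ring, zpow_neg_one]
  ring

lemma mem_Icc_of_mem_zero_one {x : ℝ} (hx : x ∈ ({0, 1} : Set ℝ)) : x ∈ Set.Icc 0 1 := by
  rcases hx with rfl | rfl <;> norm_num

lemma exists_intCast_of_mem_zero_one {x : ℝ} (hx : x ∈ ({0, 1} : Set ℝ)) :
    ∃ n : ℤ, x = n := by
  rcases hx with rfl | rfl
  exacts [⟨0, by simp⟩, ⟨1, by simp⟩]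

theorem ternaryCode_mem_Ico {θ : ℕ → ℝ} (hθ : ∀ j, θ j ∈ ({0, 1} : Set ℝ)) (K : ℕ) :
    ternaryCode θ K ∈ Set.Ico 0 (2 / 9) := by
  have hcode := sum_Ioc_zpow_three_mul_mem_Ico (fun j => mem_Icc_of_mem_zero_one (hθ j)) 0 K
  rw [← Icc_add_one_left_eq_Ioc, zero_add] at hcode
  simp only [Nat.cast_zero, zero_sub] at hcode
  exact ⟨hcode.1, hcode.2.trans (by norm_num)⟩

theorem rho3_pow_mul_ternaryCode {θ : ℕ → ℝ} (hθ : ∀ j, θ j ∈ ({0, 1} : Set ℝ))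
    {k K : ℕ} (hk : k ∈ Icc 1 K) :
    rho3 (3 ^ k * ternaryCode θ K) = θ k := by
  obtain ⟨N, hN⟩ := exists_intCast_sum_Ico_zpow_three_mul
    (fun j => exists_intCast_of_mem_zero_one (hθ j)) 1 k
  obtain ⟨ht0, ht1⟩ := sum_Ioc_zpow_three_mul_mem_Ico
    (fun j => mem_Icc_of_mem_zero_one (hθ j)) k K
  rw [pow_mul_ternaryCode θ hk, hN, add_assoc, add_comm, rho3_add_intCast]
  rcases hθ k with h | h <;> rw [h]
  · exact rho3_eq_zero_of_abs_lt (by rw [abs_of_nonneg (by linarith)]; linarith)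
  · exact rho3_eq_one_of_mem_Ioo ⟨by linarith, by linarith⟩

theorem stmt2_general (K : ℕ) (θ : ℕ → ℝ)
    (hθ : ∀ j, θ j ∈ ({0, 1} : Set ℝ)) :
    (∑ j ∈ Finset.Icc 1 K, (3:ℝ) ^ (-(j:ℤ) - 1) * θ j) ∈ Set.Ico (0:ℝ) (2/9) ∧
    ∀ k ∈ Finset.Icc 1 K,
      rho3 ((3:ℝ) ^ k * ∑ j ∈ Finset.Icc 1 K, (3:ℝ) ^ (-(j:ℤ) - 1) * θ j) = θ k :=
  ⟨ternaryCode_mem_Ico hθ K, fun _ hk => rho3_pow_mul_ternaryCode hθ hk⟩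

theorem stmt2 (K : ℕ) (hK : 0 < K) (θ : ℕ → ℝ)
    (hθ : ∀ j, θ j ∈ ({0, 1} : Set ℝ)) :
    (∑ j ∈ Finset.Icc 1 K, (3:ℝ) ^ (-(j:ℤ) - 1) * θ j) ∈ Set.Ico (0:ℝ) (2/9) ∧
    ∀ k ∈ Finset.Icc 1 K,
      rho3 ((3:ℝ) ^ k * ∑ j ∈ Finset.Icc 1 K, (3:ℝ) ^ (-(j:ℤ) - 1) * θ j) = θ k :=
  stmt2_general K θ hθ
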